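/- There exists a universal constant C > 0 such that for every Borel function α : ℝ₊ → [0,1], every x ∈ ℝ, every t ≥ 0 and every ε ≥ 0, the solution X^α of the ISBM equation satisfies E^x |X^α_{t+ε} − X^α_t|^4 ≤ C ε². -/

import Mathlib

open MeasureTheory ProbabilityTheory Filter Set

noncomputable section

namespace ISBM

variable {Ω : Type*}

/-- The symmetric sign function, with `sgn 0 = 0`. -/
def sgn (x : ℝ) : ℝ := if 0 < x then 1 else if x < 0 then -1 else 0

/-- `B` is a standard Brownian motion started at `0` under `μ`:
measurable, a.s. continuous paths starting from `0`, Gaussian increments,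
independent increments. -/
def IsBrownianMotion {mΩ : MeasurableSpace Ω} (μ : Measure Ω) (B : ℝ → Ω → ℝ) : Prop :=
  (∀ t, Measurable (B t)) ∧
  (∀ᵐ ω ∂μ, B 0 ω = 0 ∧ Continuous fun t => B t ω) ∧
  (∀ s t : ℝ, 0 ≤ s → s ≤ t →
    Measure.map (fun ω => B t ω - B s ω) μ = gaussianReal 0 ((t - s).toNNReal)) ∧
  (∀ n : ℕ, ∀ t : ℕ → ℝ, 0 ≤ t 0 → Monotone t →
    iIndepFun
      (fun i : Fin n => fun ω => B (t (i + 1)) ω - B (t i) ω) μ)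

/-- `B` is a Brownian motion with respect to the filtration `F`. -/
def IsFBrownianMotion {mΩ : MeasurableSpace Ω} (μ : Measure Ω) (F : Filtration ℝ mΩ)
    (B : ℝ → Ω → ℝ) : Prop :=
  IsBrownianMotion μ B ∧ Adapted F B ∧
  ∀ s t : ℝ, 0 ≤ s → s ≤ t →
    Indep (MeasurableSpace.comap (fun ω => B t ω - B s ω) inferInstance) (F s) μ

/-- `I` is (a version of) the stochastic integral `∫ H dY`, characterised as the limit in
probability of left-point Riemann sums along dyadic partitions. -/
def IsStochIntegral {mΩ : MeasurableSpace Ω} (μ : Measure Ω) (H Y I : ℝ → Ω → ℝ) : Prop :=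
  (∀ ω, I 0 ω = 0) ∧
  ∀ t : ℝ, 0 ≤ t → TendstoInMeasure μ
    (fun n : ℕ => fun ω => ∑ i ∈ Finset.range (2 ^ n),
      H (t * i / 2 ^ n) ω * (Y (t * (i + 1) / 2 ^ n) ω - Y (t * i / 2 ^ n) ω))
    atTop (I t)

/-- The (Stieltjes) measure of the function `R` is carried by the set `Z`:
`R` is locally constant away from `Z` (on the positive half-line). -/
def CarriedBy (R : ℝ → ℝ) (Z : Set ℝ) : Prop :=
  ∀ s : ℝ, 0 ≤ s → s ∉ Z → ∃ ε > 0, ∀ u ∈ Ioo (s - ε) (s + ε), R u = R s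

/-- `L` is (a version of) the symmetric local time at `0` of `X`, characterised by the
symmetric Tanaka formula: `L ω` is a continuous nondecreasing (Stieltjes) function starting
at `0`, carried by the zero set of `X`, and
`|X t| = |X 0| + ∫_0^t sgn(X s) dX s + L t`. -/
def IsSymmLocalTimeAtZero {mΩ : MeasurableSpace Ω} (μ : Measure Ω) (X : ℝ → Ω → ℝ)
    (L : Ω → StieltjesFunction ℝ) : Prop :=
  (∀ᵐ ω ∂μ, (L ω) 0 = 0 ∧ (Continuous fun s => L ω s) ∧
    CarriedBy (fun s => L ω s) {s : ℝ | X s ω = 0}) ∧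
  ∃ I : ℝ → Ω → ℝ, IsStochIntegral μ (fun s ω => sgn (X s ω)) X I ∧
    ∀ t : ℝ, 0 ≤ t → ∀ᵐ ω ∂μ, |X t ω| = |X 0 ω| + I t ω + (L ω) t

/-- `X` is a solution of the inhomogeneous skew Brownian motion equation
`X t = x + B t + ∫_0^t (2 α s - 1) dL⁰_s(X)`, with symmetric local time `L`. -/
def IsISBMSolution {mΩ : MeasurableSpace Ω} (μ : Measure Ω) (α : ℝ → ℝ) (x : ℝ)
    (B X : ℝ → Ω → ℝ) (L : Ω → StieltjesFunction ℝ) : Prop :=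
  (∀ᵐ ω ∂μ, Continuous fun t => X t ω) ∧
  IsSymmLocalTimeAtZero μ X L ∧
  ∀ t : ℝ, 0 ≤ t → ∀ᵐ ω ∂μ,
    X t ω = x + B t ω + ∫ s in Ioc (0:ℝ) t, (2 * α s - 1) ∂(L ω).measure

/-- `M` is a continuous local martingale for the filtration `F`. -/
def IsContLocalMartingale {mΩ : MeasurableSpace Ω} (μ : Measure Ω) (F : Filtration ℝ mΩ)
    (M : ℝ → Ω → ℝ) : Prop :=
  (∀ᵐ ω ∂μ, Continuous fun t => M t ω) ∧
  ∃ τ : ℕ → Ω → ℝ, (∀ n, IsStoppingTime F (fun ω => ((τ n ω : ℝ) : WithTop ℝ))) ∧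
    (∀ᵐ ω ∂μ, Tendsto (fun n => τ n ω) atTop atTop) ∧
    ∀ n, Martingale (fun t ω => M (min t (τ n ω)) ω) F μ

/-- `Y` is a continuous semimartingale: local martingale plus adapted continuous
finite-variation part. -/
def IsContSemimartingale {mΩ : MeasurableSpace Ω} (μ : Measure Ω) (F : Filtration ℝ mΩ)
    (Y : ℝ → Ω → ℝ) : Prop :=
  ∃ M A : ℝ → Ω → ℝ, IsContLocalMartingale μ F M ∧ Adapted F A ∧
    (∀ᵐ ω ∂μ, A 0 ω = 0 ∧ (Continuous fun t => A t ω) ∧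
      ∀ t : ℝ, 0 ≤ t → BoundedVariationOn (fun s => A s ω) (Icc 0 t)) ∧
    ∀ t ω, Y t ω = M t ω + A t ω

/-- The last zero of `Y (· ω)` before time `t` (with `sup ∅ = 0`). -/
def lastZero (Y : ℝ → Ω → ℝ) (t : ℝ) (ω : Ω) : ℝ :=
  sSup ({0} ∪ {s : ℝ | s ∈ Icc 0 t ∧ Y s ω = 0})

/-- `pk` is (a version of) the predictable projection of the bounded progressive
process `k`: it is adapted, left-continuous, and at every deterministic time `t`,
`pk t = E[k t | F_{t⁻}]`. -/
def IsPredictableProjection {mΩ : MeasurableSpace Ω} (μ : Measure Ω) (F : Filtration ℝ mΩ)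
    (k pk : ℝ → Ω → ℝ) : Prop :=
  Adapted F pk ∧
  (∀ᵐ ω ∂μ, ∀ t : ℝ, ContinuousWithinAt (fun s => pk s ω) (Iio t) t) ∧
  ∀ t : ℝ, 0 < t → pk t =ᵐ[μ] μ[k t | ⨆ s ∈ Iio t, F s]

/-- `Q` is the quadratic variation process of `X` (limit in probability of sums of
squared increments along dyadic partitions). -/
def HasQuadraticVariation {mΩ : MeasurableSpace Ω} (μ : Measure Ω) (X Q : ℝ → Ω → ℝ) : Prop :=
  ∀ t : ℝ, 0 ≤ t → TendstoInMeasure μ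
    (fun n : ℕ => fun ω => ∑ i ∈ Finset.range (2 ^ n),
      (X (t * (i + 1) / 2 ^ n) ω - X (t * i / 2 ^ n) ω) ^ 2)
    atTop (Q t)

/-- The intervals `(g n, d n)` form the excursion decomposition of the path `Y (· ω)`
away from `0`. -/
def IsExcursionDecomposition (Y : ℝ → Ω → ℝ) (g d : ℕ → Ω → ℝ) (ω : Ω) : Prop :=
  ({t : ℝ | 0 ≤ t ∧ Y t ω ≠ 0} = ⋃ n, Ioo (g n ω) (d n ω)) ∧
  (∀ n, 0 ≤ g n ω ∧ g n ω < d n ω ∧ Y (g n ω) ω = 0 ∧ Y (d n ω) ω = 0) ∧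
  (Pairwise fun m n => Disjoint (Ioo (g m ω) (d m ω)) (Ioo (g n ω) (d n ω)))

/-- The process obtained by attaching the sign `ξ n` to the excursion interval
`(g n, d n)`. -/
def excursionSign (g d : ℕ → Ω → ℝ) (ξ : ℕ → Ω → ℝ) (t : ℝ) (ω : Ω) : ℝ :=
  ∑' n, Set.indicator (Ioo (g n ω) (d n ω)) (fun _ => ξ n ω) t

/-- Number of upcrossings of the interval `[0, ε]` by the path `Y (· ω)` before time `t`. -/
def upcrossingCount (Y : ℝ → Ω → ℝ) (t ε : ℝ) (ω : Ω) : ℕ :=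
  sSup {n : ℕ | ∃ s u : ℕ → ℝ,
    (∀ i < n, 0 ≤ s i ∧ s i < u i ∧ u i ≤ t ∧ Y (s i) ω = 0 ∧ ε ≤ Y (u i) ω) ∧
    ∀ i j, i < j → j < n → u i < s j}

/-- The transition density `p^α(s,t;x,y)` of the inhomogeneous skew Brownian motion. -/
def pISBM (α : ℝ → ℝ) (s t x y : ℝ) : ℝ :=
  (∫ u in Ioo (0:ℝ) (t - s),
    ((1 + sgn y * (2 * α (s + u) - 1)) / 2) * (|y| / Real.pi) *
      (Real.exp (-(y ^ 2) / (2 * (t - (s + u)))) /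
        (Real.sqrt u * (t - s - u) ^ ((3 : ℝ) / 2))) * Real.exp (-(x ^ 2) / (2 * u))) +
  (1 / Real.sqrt (2 * Real.pi * (t - s))) *
    (Real.exp (-((y - x) ^ 2) / (2 * (t - s))) -
      Real.exp (-((y + x) ^ 2) / (2 * (t - s))) * (if 0 < x * y then 1 else 0))

/-- `X` is a nonnegative (local) submartingale of class `Σ`. -/
def IsClassSigma {mΩ : MeasurableSpace Ω} (μ : Measure Ω) (F : Filtration ℝ mΩ)
    (X : ℝ → Ω → ℝ) : Prop :=
  (∀ t ω, 0 ≤ X t ω) ∧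
  ∃ N A : ℝ → Ω → ℝ, IsContLocalMartingale μ F N ∧
    (∀ t ω, X t ω = N t ω + A t ω) ∧
    (∀ᵐ ω ∂μ, A 0 ω = 0 ∧ (Continuous fun t => A t ω) ∧
      MonotoneOn (fun t => A t ω) (Ici 0) ∧
      CarriedBy (fun s => A s ω) {s : ℝ | X s ω = 0})

open scoped ENNReal NNReal Topology

/-! Off the zero set of `X` the local time is flat, so on `[t, t + ε]` the drift
`∫ (2α - 1) dL` can only change between the first and the last zero of `X` there, and at those
zeros the equation pins it to `-x - B`. Hence, whatever `α` is,
`|X (t + ε) - X t| ≤ 3 sup_{u ∈ [t, t + ε]} |B u - B t|`. Dyadic chaining bounds that supremum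
by `∑ₘ Dₘ`, where `Dₘ` is the largest increment of `B` over the `2 ^ m` dyadic subintervals;
since `E Dₘ⁴ ≤ 2 ^ m · E|B_{ε / 2 ^ m}|⁴ = c ε² 2 ^ (-m)`, Minkowski's inequality gives
`E (∑ₘ Dₘ)⁴ ≤ C ε²`. -/

lemma eq_of_forall_mem_Ioo_eventuallyEq {f : ℝ → ℝ} {a b : ℝ} (hab : a ≤ b)
    (hf : ContinuousOn f (Icc a b)) (h : ∀ s ∈ Ioo a b, ∀ᶠ u in 𝓝 s, f u = f s) :
    f b = f a := by
  rcases hab.eq_or_lt with rfl | hlt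
  · rfl
  obtain ⟨c, -, hc⟩ := exists_hasDerivAt_eq_slope f (fun _ => 0) hlt hf
    fun s hs => (hasDerivAt_const s (f s)).congr_of_eventuallyEq (h s hs)
  rw [eq_comm, div_eq_zero_iff, sub_eq_zero, sub_eq_zero] at hc
  exact hc.resolve_right hlt.ne'

lemma exists_sub_eq_sub_of_eventuallyEq_off_zeros {ξ f Λ : ℝ → ℝ} {x t v : ℝ} (htv : t ≤ v)
    (hξ : ContinuousOn ξ (Icc t v)) (hΛ : ContinuousOn Λ (Icc t v))
    (heq : ∀ s ∈ Icc t v, ξ s = x + f s + Λ s)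
    (hΛloc : ∀ s ∈ Icc t v, ξ s ≠ 0 → ∀ᶠ u in 𝓝 s, Λ u = Λ s) :
    ∃ τ ∈ Icc t v, ∃ g ∈ Icc t v, Λ v - Λ t = f τ - f g := by
  set Z := Icc t v ∩ ξ ⁻¹' {0}
  have hZ : IsCompact Z :=
    isCompact_Icc.of_isClosed_subset (hξ.preimage_isClosed_of_isClosed isClosed_Icc
      isClosed_singleton) inter_subset_left
  rcases Z.eq_empty_or_nonempty with hZe | hZne
  · refine ⟨t, ⟨le_rfl, htv⟩, t, ⟨le_rfl, htv⟩, ?_⟩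
    rw [eq_of_forall_mem_Ioo_eventuallyEq htv hΛ fun s hs => hΛloc s (Ioo_subset_Icc_self hs)
      fun h0 => hZe.subset ⟨Ioo_subset_Icc_self hs, h0⟩, sub_self, sub_self]
  have hτ : sInf Z ∈ Z := hZ.sInf_mem hZne
  have hg : sSup Z ∈ Z := hZ.sSup_mem hZne
  refine ⟨sInf Z, hτ.1, sSup Z, hg.1, ?_⟩
  have hΛτ : Λ (sInf Z) = Λ t := by
    refine eq_of_forall_mem_Ioo_eventuallyEq hτ.1.1 (hΛ.mono (Icc_subset_Icc_right hτ.1.2))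
      fun s hs => ?_
    have hs' : s ∈ Icc t v := ⟨hs.1.le, hs.2.le.trans hτ.1.2⟩
    exact hΛloc s hs' fun h0 => (csInf_le hZ.bddBelow ⟨hs', h0⟩).not_gt hs.2
  have hΛg : Λ v = Λ (sSup Z) := by
    refine eq_of_forall_mem_Ioo_eventuallyEq hg.1.2 (hΛ.mono (Icc_subset_Icc_left hg.1.1))
      fun s hs => ?_
    have hs' : s ∈ Icc t v := ⟨hg.1.1.trans hs.1.le, hs.2.le⟩
    exact hΛloc s hs' fun h0 => (le_csSup hZ.bddAbove ⟨hs', h0⟩).not_gt hs.1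
  have h0τ := heq _ hτ.1
  have h0g := heq _ hg.1
  rw [hτ.2] at h0τ
  rw [hg.2] at h0g
  linarith

lemma enorm_sub_le_three_mul_of_forall_enorm_sub_le {ξ f Λ : ℝ → ℝ} {x t v : ℝ} {D : ℝ≥0∞}
    (htv : t ≤ v) (hξ : ContinuousOn ξ (Icc t v)) (hΛ : ContinuousOn Λ (Icc t v))
    (heq : ∀ s ∈ Icc t v, ξ s = x + f s + Λ s)
    (hΛloc : ∀ s ∈ Icc t v, ξ s ≠ 0 → ∀ᶠ u in 𝓝 s, Λ u = Λ s)
    (hD : ∀ u ∈ Icc t v, ‖f u - f t‖ₑ ≤ D) :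
    ‖ξ v - ξ t‖ₑ ≤ 3 * D := by
  obtain ⟨τ, hτ, g, hg, hΛ⟩ := exists_sub_eq_sub_of_eventuallyEq_off_zeros htv hξ hΛ heq hΛloc
  have hsplit : ξ v - ξ t = (f v - f t) + (f τ - f t) - (f g - f t) := by
    rw [heq v ⟨htv, le_rfl⟩, heq t ⟨le_rfl, htv⟩]
    linarith
  calc ‖ξ v - ξ t‖ₑ ≤ ‖f v - f t‖ₑ + ‖f τ - f t‖ₑ + ‖f g - f t‖ₑ := by
        rw [hsplit]
        exact enorm_sub_le.trans (by gcongr; exact enorm_add_le _ _)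
    _ ≤ D + D + D := add_le_add (add_le_add (hD v ⟨htv, le_rfl⟩) (hD τ hτ)) (hD g hg)
    _ = 3 * D := by ring

def dyadicOscillation (g : ℝ → ℝ) (m : ℕ) : ℝ≥0∞ :=
  ⨆ k : Fin (2 ^ m), ‖g ((k + 1 : ℕ) / 2 ^ m) - g (k / 2 ^ m)‖ₑ

lemma enorm_sub_le_dyadicOscillation_succ (g : ℝ → ℝ) {n k : ℕ} (hk : k ≤ 2 ^ (n + 1)) :
    ‖g (k / 2 ^ (n + 1)) - g ((k / 2 : ℕ) / 2 ^ n)‖ₑ ≤ dyadicOscillation g (n + 1) := by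
  obtain ⟨j, rfl | rfl⟩ := Nat.even_or_odd' k
  · rw [Nat.mul_div_cancel_left j two_pos, Nat.cast_mul, Nat.cast_two,
      show 2 * (j : ℝ) / 2 ^ (n + 1) = j / 2 ^ n by ring, sub_self, enorm_zero]
    exact zero_le
  · refine le_of_eq_of_le ?_ (le_iSup _ (⟨2 * j, by omega⟩ : Fin (2 ^ (n + 1))))
    rw [show (2 * j + 1) / 2 = j by omega]
    push_cast
    ring_nf

lemma enorm_sub_le_sum_dyadicOscillation (g : ℝ → ℝ) (n : ℕ) {k : ℕ} (hk : k ≤ 2 ^ n) :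
    ‖g (k / 2 ^ n) - g 0‖ₑ ≤ ∑ m ∈ Finset.range (n + 1), dyadicOscillation g m := by
  induction n generalizing k with
  | zero =>
    interval_cases k
    · simp
    · simp [dyadicOscillation]
  | succ n ih =>
    calc ‖g (k / 2 ^ (n + 1)) - g 0‖ₑ
        ≤ ‖g (k / 2 ^ (n + 1)) - g ((k / 2 : ℕ) / 2 ^ n)‖ₑ + ‖g ((k / 2 : ℕ) / 2 ^ n) - g 0‖ₑ :=
          sub_add_sub_cancel (g (k / 2 ^ (n + 1))) (g ((k / 2 : ℕ) / 2 ^ n)) (g 0) ▸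
            enorm_add_le _ _
      _ ≤ dyadicOscillation g (n + 1) + ∑ m ∈ Finset.range (n + 1), dyadicOscillation g m :=
          add_le_add (enorm_sub_le_dyadicOscillation_succ g hk) (ih (by rw [pow_succ] at hk; omega))
      _ = ∑ m ∈ Finset.range (n + 2), dyadicOscillation g m := by
          rw [Finset.sum_range_succ _ (n + 1), add_comm]

lemma enorm_sub_le_tsum_dyadicOscillation {g : ℝ → ℝ} (hg : ContinuousOn g (Icc 0 1)) {r : ℝ}
    (hr : r ∈ Icc 0 1) : ‖g r - g 0‖ₑ ≤ ∑' m, dyadicOscillation g m := by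
  set k : ℕ → ℕ := fun n => ⌊r * 2 ^ n⌋₊
  have hk_le : ∀ n, (k n : ℝ) ≤ r * 2 ^ n := fun n => Nat.floor_le (mul_nonneg hr.1 (by positivity))
  have hk_mem : ∀ n, (k n : ℝ) / 2 ^ n ∈ Icc 0 1 := fun n =>
    ⟨by positivity, (div_le_one (by positivity)).2
      ((hk_le n).trans (mul_le_of_le_one_left (by positivity) hr.2))⟩
  have hlim : Tendsto (fun n => (k n : ℝ) / 2 ^ n) atTop (𝓝[Icc 0 1] r) :=
    tendsto_nhdsWithin_iff.2 ⟨(tendsto_nat_floor_mul_div_atTop hr.1).comp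
      (tendsto_pow_atTop_atTop_of_one_lt one_lt_two), Eventually.of_forall hk_mem⟩
  refine le_of_tendsto' (((hg r hr).tendsto.comp hlim).sub_const (g 0)).enorm fun n => ?_
  have hkn : k n ≤ 2 ^ n := by
    have := (hk_mem n).2
    rw [div_le_one (by positivity)] at this
    exact_mod_cast this
  exact (enorm_sub_le_sum_dyadicOscillation g n hkn).trans (ENNReal.sum_le_tsum _)

lemma enorm_sub_le_tsum_dyadicOscillation_Icc {f : ℝ → ℝ} {t ε u : ℝ}
    (hf : ContinuousOn f (Icc t (t + ε))) (hε : 0 ≤ ε) (hu : u ∈ Icc t (t + ε)) :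
    ‖f u - f t‖ₑ ≤ ∑' m, dyadicOscillation (fun r => f (t + r * ε)) m := by
  rcases hε.eq_or_lt with rfl | hε
  · simp [le_antisymm (by simpa using hu.2) hu.1]
  have hg : ContinuousOn (fun r => f (t + r * ε)) (Icc 0 1) :=
    hf.comp (by fun_prop) fun r hr => ⟨by nlinarith [hr.1], by nlinarith [hr.2]⟩
  have hr : (u - t) / ε ∈ Icc 0 1 :=
    ⟨div_nonneg (by linarith [hu.1]) hε.le, (div_le_one hε).2 (by linarith [hu.2])⟩
  simpa [div_mul_cancel₀ _ hε.ne'] using enorm_sub_le_tsum_dyadicOscillation hg hr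

section StieltjesDrift

variable (F : StieltjesFunction ℝ) {h : ℝ → ℝ} (a : ℝ)

lemma abs_setIntegral_Ioc_sub_le (hh : Measurable h) (h1 : ∀ r, |h r| ≤ 1) {s u : ℝ}
    (hsu : s ≤ u) :
    |∫ r in Ioc a u, h r ∂F.measure - ∫ r in Ioc a s, h r ∂F.measure| ≤ F u - F s := by
  have hfin : F.measure (Ioc a u) < ∞ := by rw [F.measure_Ioc]; exact ENNReal.ofReal_lt_top
  have hint : IntegrableOn h (Ioc a u) F.measure :=
    IntegrableOn.of_bound hfin hh.aestronglyMeasurable 1 (Eventually.of_forall h1)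
  rw [← setIntegral_sdiff measurableSet_Ioc hint (Ioc_subset_Ioc_right hsu)]
  have hsub : Ioc a u \ Ioc a s ⊆ Ioc s u := fun r ⟨⟨har, hru⟩, hrs⟩ =>
    ⟨not_le.1 fun hrs' => hrs ⟨har, hrs'⟩, hru⟩
  calc |∫ r in Ioc a u \ Ioc a s, h r ∂F.measure|
      ≤ 1 * F.measure.real (Ioc a u \ Ioc a s) :=
        norm_setIntegral_le_of_norm_le_const ((measure_mono sdiff_subset).trans_lt hfin)
          fun r _ => (Real.norm_eq_abs (h r)).trans_le (h1 r)
    _ ≤ F.measure.real (Ioc s u) := by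
        rw [one_mul]
        exact measureReal_mono hsub (by rw [F.measure_Ioc]; exact ENNReal.ofReal_ne_top)
    _ = F u - F s := by
        rw [measureReal_def, F.measure_Ioc, ENNReal.toReal_ofReal (sub_nonneg.2 (F.mono hsu))]

lemma abs_setIntegral_Ioc_sub_le_abs (hh : Measurable h) (h1 : ∀ r, |h r| ≤ 1) (s u : ℝ) :
    |∫ r in Ioc a u, h r ∂F.measure - ∫ r in Ioc a s, h r ∂F.measure| ≤ |F u - F s| := by
  rcases le_total s u with hsu | hus
  · exact (abs_setIntegral_Ioc_sub_le F a hh h1 hsu).trans (le_abs_self _)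
  · rw [abs_sub_comm, abs_sub_comm (F u)]
    exact (abs_setIntegral_Ioc_sub_le F a hh h1 hus).trans (le_abs_self _)

lemma continuous_setIntegral_Ioc (hh : Measurable h) (h1 : ∀ r, |h r| ≤ 1)
    (hF : Continuous F) : Continuous fun s => ∫ r in Ioc a s, h r ∂F.measure := by
  refine continuous_iff_continuousAt.2 fun s => tendsto_iff_dist_tendsto_zero.2 ?_
  have hFs : Tendsto (fun u => |F u - F s|) (𝓝 s) (𝓝 0) := by
    simpa using ((hF.tendsto s).sub_const (F s)).abs
  exact squeeze_zero (fun _ => dist_nonneg)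
    (fun u => (Real.dist_eq _ _).trans_le (abs_setIntegral_Ioc_sub_le_abs F a hh h1 s u)) hFs

lemma eventually_setIntegral_Ioc_eq (hh : Measurable h) (h1 : ∀ r, |h r| ≤ 1) {s δ : ℝ}
    (hδ : 0 < δ) (hF : ∀ u ∈ Ioo (s - δ) (s + δ), F u = F s) :
    ∀ᶠ u in 𝓝 s, ∫ r in Ioc a u, h r ∂F.measure = ∫ r in Ioc a s, h r ∂F.measure := by
  filter_upwards [Ioo_mem_nhds (by linarith : s - δ < s) (by linarith : s < s + δ)] with u hu
  have := abs_setIntegral_Ioc_sub_le_abs F a hh h1 s u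
  rw [hF u hu, sub_self, abs_zero] at this
  exact sub_eq_zero.1 (abs_nonpos_iff.1 this)

end StieltjesDrift

lemma ae_forall_eq_of_continuous {mΩ : MeasurableSpace Ω} {μ : Measure Ω}
    {Y Z : ℝ → Ω → ℝ} (hY : ∀ᵐ ω ∂μ, Continuous fun s => Y s ω)
    (hZ : ∀ᵐ ω ∂μ, Continuous fun s => Z s ω) (h : ∀ s, 0 ≤ s → ∀ᵐ ω ∂μ, Y s ω = Z s ω) :
    ∀ᵐ ω ∂μ, ∀ s, 0 ≤ s → Y s ω = Z s ω := by
  have hQ : ∀ᵐ ω ∂μ, ∀ q : ℚ, 0 ≤ (q : ℝ) → Y q ω = Z q ω := by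
    refine ae_all_iff.2 fun q => ?_
    by_cases hq : 0 ≤ (q : ℝ)
    · exact (h q hq).mono fun ω hω _ => hω
    · exact Eventually.of_forall fun ω hq' => absurd hq' hq
  have hdense : Ici (0 : ℝ) ⊆ closure (Ioi 0 ∩ range ((↑) : ℚ → ℝ)) := by
    rw [← closure_Ioi]
    exact closure_minimal (Rat.denseRange_cast.open_subset_closure_inter isOpen_Ioi)
      isClosed_closure
  filter_upwards [hY, hZ, hQ] with ω hYω hZω hQω s hs
  refine EqOn.of_subset_closure (s := Ioi 0 ∩ range ((↑) : ℚ → ℝ)) ?_ hYω.continuousOn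
    hZω.continuousOn (inter_subset_left.trans Ioi_subset_Ici_self) hdense hs
  rintro _ ⟨hq, q, rfl⟩
  exact hQω q (le_of_lt hq)

lemma enorm_sub_le_three_mul_tsum_dyadicOscillation {ξ f h : ℝ → ℝ} {F : StieltjesFunction ℝ}
    {x t ε : ℝ} (hξ : Continuous ξ) (hf : Continuous f) (hF : Continuous F) (hh : Measurable h)
    (h1 : ∀ r, |h r| ≤ 1) (hcarr : CarriedBy F {s | ξ s = 0})
    (heq : ∀ s, 0 ≤ s → ξ s = x + f s + ∫ r in Ioc 0 s, h r ∂F.measure) (ht : 0 ≤ t)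
    (hε : 0 ≤ ε) :
    ‖ξ (t + ε) - ξ t‖ₑ ≤ 3 * ∑' m, dyadicOscillation (fun r => f (t + r * ε)) m := by
  refine enorm_sub_le_three_mul_of_forall_enorm_sub_le (le_add_of_nonneg_right hε)
    hξ.continuousOn (continuous_setIntegral_Ioc F 0 hh h1 hF).continuousOn
    (fun s hs => heq s (ht.trans hs.1)) (fun s hs hs0 => ?_)
    (fun u hu => enorm_sub_le_tsum_dyadicOscillation_Icc hf.continuousOn hε hu)
  obtain ⟨δ, hδ, hconst⟩ := hcarr s (ht.trans hs.1) hs0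
  exact eventually_setIntegral_Ioc_eq F 0 hh h1 hδ hconst

lemma eLpNorm_tsum_le {α : Type*} {mα : MeasurableSpace α} {μ : Measure α} {f : ℕ → α → ℝ≥0∞}
    (hf : ∀ n, AEMeasurable (f n) μ) {p : ℝ≥0∞} (hp : 1 ≤ p) (hp_top : p ≠ ∞) :
    eLpNorm (∑' n, f n) p μ ≤ ∑' n, eLpNorm (f n) p μ := by
  have hp0 : p ≠ 0 := (zero_lt_one.trans_le hp).ne'
  have hrpow : ∀ {q : ℝ}, 0 < q → ∀ g : ℕ → ℝ≥0∞, (⨆ n, g n) ^ q = ⨆ n, g n ^ q := fun hq g =>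
    (ENNReal.monotone_rpow_of_nonneg hq.le).map_iSup_of_continuousAt
      (ENNReal.continuous_rpow_const.continuousAt) (ENNReal.zero_rpow_of_pos hq)
  have hq : 0 < p.toReal := ENNReal.toReal_pos hp0 hp_top
  have hsum : ∑' n, f n = fun x => ⨆ N, (∑ n ∈ Finset.range N, f n) x := funext fun x => by
    simp only [ENNReal.tsum_apply, Finset.sum_apply, ENNReal.tsum_eq_iSup_nat]
  calc eLpNorm (∑' n, f n) p μ = ⨆ N, eLpNorm (∑ n ∈ Finset.range N, f n) p μ := by
        simp only [eLpNorm_eq_lintegral_rpow_enorm_toReal hp0 hp_top, enorm_eq_self, hsum,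
          hrpow hq]
        rw [lintegral_iSup' (fun N => ?_) (Eventually.of_forall fun x N M hNM => ?_),
          hrpow (one_div_pos.2 hq)]
        · exact (Finset.aemeasurable_sum _ fun n _ => hf n).pow_const _
        · exact ENNReal.rpow_le_rpow (by
            simpa using Finset.sum_le_sum_of_subset (Finset.range_subset_range.2 hNM)) hq.le
    _ ≤ ⨆ N, ∑ n ∈ Finset.range N, eLpNorm (f n) p μ :=
        iSup_mono fun N => eLpNorm_sum_le (fun n _ => (hf n).aestronglyMeasurable) hp
    _ = ∑' n, eLpNorm (f n) p μ := ENNReal.tsum_eq_iSup_nat.symm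

lemma eLpNorm_four_pow {α ε : Type*} [MeasurableSpace α] [ENorm ε] (μ : Measure α) (f : α → ε) :
    eLpNorm f 4 μ ^ 4 = ∫⁻ x, ‖f x‖ₑ ^ 4 ∂μ := by
  simpa using eLpNorm_nnreal_pow_eq_lintegral (μ := μ) (f := f) (p := 4) (by norm_num)

def gaussianFourthMoment : ℝ≥0∞ := ∫⁻ x, ‖x‖ₑ ^ 4 ∂gaussianReal 0 1

lemma gaussianFourthMoment_lt_top : gaussianFourthMoment < ∞ := by
  simpa [gaussianFourthMoment, eLpNorm_four_pow] using
    ENNReal.pow_lt_top (n := 4) (memLp_id_gaussianReal (μ := 0) (v := 1) 4).eLpNorm_lt_top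

lemma lintegral_enorm_pow_four_gaussianReal (v : ℝ≥0) :
    ∫⁻ x, ‖x‖ₑ ^ 4 ∂gaussianReal 0 v = v ^ 2 * gaussianFourthMoment := by
  have hmap : (gaussianReal 0 1).map (√(v : ℝ) * ·) = gaussianReal 0 v := by
    convert gaussianReal_map_const_mul (μ := 0) (v := 1) (√v) using 2
    · simp
    · ext; simp
  rw [← hmap, lintegral_map (by fun_prop) (by fun_prop), gaussianFourthMoment,
    ← lintegral_const_mul _ (by fun_prop)]
  congr 1 with x
  have hsqrt : √(v : ℝ) ^ 4 = (v : ℝ) ^ 2 := by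
    rw [show 4 = 2 * 2 by rfl, pow_mul, Real.sq_sqrt v.coe_nonneg]
  rw [enorm_mul, mul_pow, ← enorm_pow, hsqrt, enorm_pow, Real.enorm_of_nonneg v.coe_nonneg,
    ENNReal.ofReal_coe_nnreal]

lemma lintegral_dyadicOscillation_pow_four_le {mΩ : MeasurableSpace Ω}
    {μ : Measure Ω} {B : ℝ → Ω → ℝ} (hBm : ∀ s, Measurable (B s))
    (hB : ∀ s u, 0 ≤ s → s ≤ u →
      μ.map (fun ω => B u ω - B s ω) = gaussianReal 0 (u - s).toNNReal)
    {t ε : ℝ} (ht : 0 ≤ t) (hε : 0 ≤ ε) (m : ℕ) :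
    ∫⁻ ω, dyadicOscillation (fun r => B (t + r * ε) ω) m ^ 4 ∂μ
      ≤ ENNReal.ofReal (ε ^ 2) * gaussianFourthMoment * 2⁻¹ ^ m := by
  let Δ : Fin (2 ^ m) → Ω → ℝ := fun k ω =>
    B (t + (k + 1 : ℕ) / 2 ^ m * ε) ω - B (t + k / 2 ^ m * ε) ω
  have hΔ : ∀ k, ∫⁻ ω, ‖Δ k ω‖ₑ ^ 4 ∂μ = ENNReal.ofReal (ε / 2 ^ m) ^ 2 * gaussianFourthMoment := by
    intro k
    have hlen : t + (k + 1 : ℕ) / 2 ^ m * ε - (t + k / 2 ^ m * ε) = ε / 2 ^ m := by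
      push_cast; ring
    have hs : 0 ≤ t + k / 2 ^ m * ε := by positivity
    rw [← lintegral_map (f := fun x : ℝ => ‖x‖ₑ ^ 4) (by fun_prop) (by fun_prop),
      hB _ _ hs (by linarith [hlen, div_nonneg hε (pow_nonneg zero_le_two m)]), hlen,
      lintegral_enorm_pow_four_gaussianReal]
    rfl
  calc ∫⁻ ω, dyadicOscillation (fun r => B (t + r * ε) ω) m ^ 4 ∂μ
      ≤ ∫⁻ ω, ∑ k, ‖Δ k ω‖ₑ ^ 4 ∂μ := lintegral_mono fun ω => by
        rw [dyadicOscillation, ENNReal.iSup_pow]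
        exact iSup_le fun k =>
          Finset.single_le_sum (f := fun k => ‖Δ k ω‖ₑ ^ 4) (fun _ _ => zero_le) (Finset.mem_univ k)
    _ = ∑ k, ∫⁻ ω, ‖Δ k ω‖ₑ ^ 4 ∂μ := lintegral_finsetSum _ fun k _ => by fun_prop
    _ = 2 ^ m * ENNReal.ofReal (ε / 2 ^ m) ^ 2 * gaussianFourthMoment := by
        simp [hΔ, mul_assoc]
    _ = ENNReal.ofReal (ε ^ 2) * gaussianFourthMoment * 2⁻¹ ^ m := by
        have h2 : (2 : ℝ≥0∞) ^ m = ENNReal.ofReal (2 ^ m) := by simp [ENNReal.ofReal_pow]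
        have h2inv : (2⁻¹ : ℝ≥0∞) ^ m = ENNReal.ofReal (2⁻¹ ^ m) := by
          simp [ENNReal.ofReal_pow, ENNReal.ofReal_inv_of_pos, ENNReal.inv_pow]
        rw [h2, h2inv, ← ENNReal.ofReal_pow (by positivity), ← ENNReal.ofReal_mul (by positivity),
          mul_right_comm, ← ENNReal.ofReal_mul (by positivity)]
        congr 2
        rw [inv_pow]
        field_simp

lemma lintegral_tsum_dyadicOscillation_pow_four_le {mΩ : MeasurableSpace Ω}
    {μ : Measure Ω} {B : ℝ → Ω → ℝ} (hBm : ∀ s, Measurable (B s))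
    (hB : ∀ s u, 0 ≤ s → s ≤ u →
      μ.map (fun ω => B u ω - B s ω) = gaussianReal 0 (u - s).toNNReal)
    {t ε : ℝ} (ht : 0 ≤ t) (hε : 0 ≤ ε) :
    ∫⁻ ω, (∑' m, dyadicOscillation (fun r => B (t + r * ε) ω) m) ^ 4 ∂μ
      ≤ ENNReal.ofReal (ε ^ 2) * gaussianFourthMoment * (1 - 2⁻¹ ^ (4⁻¹ : ℝ))⁻¹ ^ 4 := by
  set A := ENNReal.ofReal (ε ^ 2) * gaussianFourthMoment
  set ρ : ℝ≥0∞ := 2⁻¹ ^ (4⁻¹ : ℝ)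
  let D : ℕ → Ω → ℝ≥0∞ := fun m ω => dyadicOscillation (fun r => B (t + r * ε) ω) m
  have hroot : ∀ x : ℝ≥0∞, (x ^ (4⁻¹ : ℝ)) ^ 4 = x := fun x => by
    simpa using ENNReal.rpow_inv_natCast_pow (n := 4) (by norm_num) x
  have hD : ∀ m, eLpNorm (D m) 4 μ ≤ A ^ (4⁻¹ : ℝ) * ρ ^ m := fun m => by
    rw [← ENNReal.pow_le_pow_left_iff four_ne_zero, eLpNorm_four_pow, mul_pow, ← pow_mul,
      mul_comm m, pow_mul, hroot, hroot]
    simpa only [enorm_eq_self] using lintegral_dyadicOscillation_pow_four_le hBm hB ht hε m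
  have hDm : ∀ m, AEMeasurable (D m) μ := fun m =>
    (Measurable.iSup fun k => by fun_prop).aemeasurable
  calc ∫⁻ ω, (∑' m, D m ω) ^ 4 ∂μ = eLpNorm (∑' m, D m) 4 μ ^ 4 := by
        simp [eLpNorm_four_pow, ENNReal.tsum_apply]
    _ ≤ (∑' m, A ^ (4⁻¹ : ℝ) * ρ ^ m) ^ 4 := by
        gcongr
        exact (eLpNorm_tsum_le hDm (by norm_num) (by norm_num)).trans (ENNReal.tsum_le_tsum hD)
    _ = A * (1 - ρ)⁻¹ ^ 4 := by
        rw [ENNReal.tsum_mul_left, ENNReal.tsum_geometric, mul_pow, hroot]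

section ISBMSolution

variable {mΩ : MeasurableSpace Ω} {μ : Measure Ω} {α : ℝ → ℝ} {x : ℝ}
  {B X : ℝ → Ω → ℝ} {L : Ω → StieltjesFunction ℝ}

lemma IsISBMSolution.ae_forall_eq (hsol : IsISBMSolution μ α x B X L) (hαm : Measurable α)
    (hα : ∀ s, |2 * α s - 1| ≤ 1) (hB : ∀ᵐ ω ∂μ, Continuous fun s => B s ω) :
    ∀ᵐ ω ∂μ, ∀ s, 0 ≤ s → X s ω = x + B s ω + ∫ r in Ioc 0 s, (2 * α r - 1) ∂(L ω).measure := by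
  refine ae_forall_eq_of_continuous hsol.1 ?_ hsol.2.2
  filter_upwards [hB, hsol.2.1.1] with ω hBω hLω
  exact (continuous_const.add hBω).add
    (continuous_setIntegral_Ioc _ 0 (by fun_prop) hα hLω.2.1)

/-- `3⁴` comes from the reflection bound, `(∑ₘ 2^(-m/4))⁴` from chaining in `L⁴`. -/
def kolmogorovConstant : ℝ≥0∞ := 81 * gaussianFourthMoment * (1 - 2⁻¹ ^ (4⁻¹ : ℝ))⁻¹ ^ 4

lemma kolmogorovConstant_ne_top : kolmogorovConstant ≠ ∞ := by
  have hρ : (2⁻¹ : ℝ≥0∞) ^ (4⁻¹ : ℝ) < 1 := ENNReal.rpow_lt_one (by norm_num) (by norm_num)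
  exact ENNReal.mul_ne_top (ENNReal.mul_ne_top (by norm_num) gaussianFourthMoment_lt_top.ne)
    (ENNReal.pow_ne_top (ENNReal.inv_ne_top.2 (tsub_pos_of_lt hρ).ne'))

lemma IsISBMSolution.lintegral_enorm_sub_pow_four_le (hsol : IsISBMSolution μ α x B X L)
    (hαm : Measurable α) (hα01 : ∀ s, α s ∈ Icc 0 1) (hB : IsBrownianMotion μ B) {t ε : ℝ}
    (ht : 0 ≤ t) (hε : 0 ≤ ε) :
    ∫⁻ ω, ‖X (t + ε) ω - X t ω‖ₑ ^ 4 ∂μ ≤ kolmogorovConstant * ENNReal.ofReal (ε ^ 2) := by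
  have hα : ∀ s, |2 * α s - 1| ≤ 1 := fun s =>
    abs_le.2 ⟨by linarith [(hα01 s).1], by linarith [(hα01 s).2]⟩
  have hpath : ∀ᵐ ω ∂μ, ‖X (t + ε) ω - X t ω‖ₑ ^ 4
      ≤ 81 * (∑' m, dyadicOscillation (fun r => B (t + r * ε) ω) m) ^ 4 := by
    filter_upwards [hsol.1, hB.2.1, hsol.2.1.1,
      hsol.ae_forall_eq hαm hα (hB.2.1.mono fun _ h => h.2)] with ω hXω hBω hLω heq
    calc ‖X (t + ε) ω - X t ω‖ₑ ^ 4
        ≤ (3 * ∑' m, dyadicOscillation (fun r => B (t + r * ε) ω) m) ^ 4 := by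
          gcongr
          exact enorm_sub_le_three_mul_tsum_dyadicOscillation (ξ := fun s => X s ω)
            (f := fun s => B s ω) (F := L ω) (h := fun r => 2 * α r - 1) hXω hBω.2 hLω.2.1
            (by fun_prop) hα hLω.2.2 heq ht hε
      _ = _ := by ring
  calc ∫⁻ ω, ‖X (t + ε) ω - X t ω‖ₑ ^ 4 ∂μ
      ≤ ∫⁻ ω, 81 * (∑' m, dyadicOscillation (fun r => B (t + r * ε) ω) m) ^ 4 ∂μ :=
        lintegral_mono_ae hpath
    _ ≤ 81 * (ENNReal.ofReal (ε ^ 2) * gaussianFourthMoment * (1 - 2⁻¹ ^ (4⁻¹ : ℝ))⁻¹ ^ 4) := by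
        rw [lintegral_const_mul' _ _ (by norm_num)]
        gcongr
        exact lintegral_tsum_dyadicOscillation_pow_four_le hB.1 hB.2.2.1 ht hε
    _ = kolmogorovConstant * ENNReal.ofReal (ε ^ 2) := by
        rw [kolmogorovConstant]
        ring

end ISBMSolution

/-- uniform Kolmogorov estimate: there is a universal constant `C > 0`
such that for every Borel `α` with values in `[0,1]`, every starting point `x`, and
every solution `X` of the ISBM equation, `E|X_{t+ε} − X_t|⁴ ≤ C ε²` for all `t, ε ≥ 0`. -/
theorem isbm_kolmogorov_estimate :
    ∃ C : ℝ, 0 < C ∧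
      ∀ (Ω : Type) (mΩ : MeasurableSpace Ω) (μ : Measure Ω), IsProbabilityMeasure μ →
        ∀ (α : ℝ → ℝ), Measurable α → (∀ s, α s ∈ Icc (0:ℝ) 1) →
        ∀ (x : ℝ) (B X : ℝ → Ω → ℝ) (L : Ω → StieltjesFunction ℝ),
          IsBrownianMotion μ B → (∀ t, Measurable (X t)) →
          IsISBMSolution μ α x B X L →
          ∀ t ε : ℝ, 0 ≤ t → 0 ≤ ε →
            ∫ ω, |X (t + ε) ω - X t ω| ^ 4 ∂μ ≤ C * ε ^ 2 := by
  refine ⟨kolmogorovConstant.toReal + 1, by positivity, ?_⟩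
  intro Ω _ μ _ α hαm hα01 x B X L hB hXm hsol t ε ht hε
  rw [integral_eq_lintegral_of_nonneg_ae (Eventually.of_forall fun ω => by positivity)
    (by fun_prop)]
  refine ENNReal.toReal_le_of_le_ofReal (by positivity) ?_
  calc ∫⁻ ω, ENNReal.ofReal (|X (t + ε) ω - X t ω| ^ 4) ∂μ
      = ∫⁻ ω, ‖X (t + ε) ω - X t ω‖ₑ ^ 4 ∂μ := by
        simp_rw [Real.enorm_eq_ofReal_abs, ENNReal.ofReal_pow (abs_nonneg _)]
    _ ≤ kolmogorovConstant * ENNReal.ofReal (ε ^ 2) :=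
        hsol.lintegral_enorm_sub_pow_four_le hαm hα01 hB ht hε
    _ ≤ ENNReal.ofReal ((kolmogorovConstant.toReal + 1) * ε ^ 2) := by
        rw [ENNReal.ofReal_mul (by positivity), ENNReal.ofReal_add (by positivity) zero_le_one,
          ENNReal.ofReal_toReal kolmogorovConstant_ne_top]
        gcongr
        exact le_self_add

end ISBM
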